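/- arXiv:0905.3583 — 5 statements merged into one kernel-verified Lean document; each statement's English description precedes it below -/
import Mathlib

section
/- Let d ≥ 1 be a real number, C > 0, and define φ(η) = η^{1-1/d} + C·(1-η)^2 - C for η ∈ [0,1], so that φ(η) = η·(η^{-1/d} + C·η - 2C) for η > 0. Let C⋆ = (1/d)·((d+1)/2)^{(d+1)/d}. Then φ(η) < 0 for some η ∈ (0,1] if and only if C > C⋆. -/
/-!
For `η > 0`, `φ(η) = η (η^{-p} + Cη - 2C)` with `p = 1/d`, so `φ < 0` somewhere on `(0,1]` iff
`η^{-p} + Cη < 2C` there. Writing `C = p v^{1+p}`, weighted AM-GM gives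
`η^{-p} + Cη ≥ (1+p) v^p` for all `η > 0`, with equality at `η = 1/v`. Hence the criterion is
`(1+p) v^p < 2 p v^{1+p}`, i.e. `v > (1+p)/(2p) = (d+1)/2`, which is `C > C⋆`; and since
`(d+1)/2 ≥ 1`, the minimiser `1/v` then lies in `(0,1]`.
-/

open Real Set

lemma one_add_le_rpow_neg_add_mul {p y : ℝ} (hp : 0 < p) (hy : 0 < y) :
    1 + p ≤ y ^ (-p) + p * y := by
  have hp1 : 0 < 1 + p := by linarith
  have h := geom_mean_le_arith_mean2_weighted (inv_pos.2 hp1).le (div_pos hp hp1).le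
    (rpow_pos_of_pos hy (-p)).le hy.le (by field_simp)
  have hgeom : (y ^ (-p)) ^ (1 + p)⁻¹ * y ^ (p / (1 + p)) = 1 := by
    rw [← rpow_mul hy.le, ← rpow_add hy, neg_mul, ← div_eq_mul_inv, neg_add_cancel, rpow_zero]
  rw [hgeom] at h
  have : (1 + p)⁻¹ * y ^ (-p) + p / (1 + p) * y = (y ^ (-p) + p * y) / (1 + p) := by ring
  rwa [this, le_div_iff₀ hp1, one_mul] at h

lemma one_add_mul_rpow_le_rpow_neg_add_mul {p v x : ℝ} (hp : 0 < p) (hv : 0 < v) (hx : 0 < x) :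
    (1 + p) * v ^ p ≤ x ^ (-p) + p * v ^ (1 + p) * x := by
  have h := mul_le_mul_of_nonneg_left (one_add_le_rpow_neg_add_mul hp (mul_pos hv hx))
    (rpow_pos_of_pos hv p).le
  have hvp : v ^ p * v ^ (-p) = 1 := by rw [← rpow_add hv, add_neg_cancel, rpow_zero]
  calc (1 + p) * v ^ p = v ^ p * (1 + p) := mul_comm _ _
    _ ≤ v ^ p * ((v * x) ^ (-p) + p * (v * x)) := h
    _ = x ^ (-p) + p * v ^ (1 + p) * x := by
      rw [mul_rpow hv.le hx.le, rpow_add hv, rpow_one]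
      linear_combination x ^ (-p) * hvp

lemma inv_rpow_neg_add_mul_inv_eq {p v : ℝ} (hv : 0 < v) :
    v⁻¹ ^ (-p) + p * v ^ (1 + p) * v⁻¹ = (1 + p) * v ^ p := by
  rw [inv_rpow hv.le, rpow_neg hv.le, inv_inv, rpow_add hv, rpow_one]
  field_simp

lemma exists_rpow_neg_add_mul_lt_iff {p v : ℝ} (hp : 0 < p) (hp1 : p ≤ 1) (hv : 0 < v) :
    (∃ η ∈ Ioc (0 : ℝ) 1, η ^ (-p) + p * v ^ (1 + p) * η < 2 * (p * v ^ (1 + p))) ↔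
      (1 + p) / (2 * p) < v := by
  have hvp : 0 < v ^ p := rpow_pos_of_pos hv p
  have hcrit : (1 + p) * v ^ p < 2 * (p * v ^ (1 + p)) ↔ (1 + p) / (2 * p) < v := by
    rw [div_lt_iff₀ (by positivity), rpow_add hv, rpow_one,
      show 2 * (p * (v * v ^ p)) = v * (2 * p) * v ^ p by ring]
    exact mul_lt_mul_iff_of_pos_right hvp
  rw [← hcrit]
  constructor
  · rintro ⟨η, ⟨hη, -⟩, hlt⟩
    exact (one_add_mul_rpow_le_rpow_neg_add_mul hp hv hη).trans_lt hlt
  · intro hlt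
    have hv1 : 1 ≤ v := by
      refine le_trans ?_ (hcrit.1 hlt).le
      rw [le_div_iff₀ (by positivity)]
      linarith
    exact ⟨v⁻¹, ⟨inv_pos.2 hv, inv_le_one_of_one_le₀ hv1⟩, by rwa [inv_rpow_neg_add_mul_inv_eq hv]⟩

lemma rpow_one_sub_add_mul_one_sub_sq_sub_eq {p c η : ℝ} (hη : 0 < η) :
    η ^ (1 - p) + c * (1 - η) ^ 2 - c = η * (η ^ (-p) + c * η - 2 * c) := by
  rw [show 1 - p = 1 + -p by ring, rpow_add hη, rpow_one]
  ring

/-- Droplet formation criterion: with `φ(η) = η^{1-1/d} + C(1-η)² - C`,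
`φ` is negative somewhere on `(0,1]` iff `C > C⋆ = (1/d)((d+1)/2)^{(d+1)/d}`. -/
theorem stmt1 (d C : ℝ) (hd : 1 ≤ d) (hC : 0 < C) :
    (∃ η ∈ Set.Ioc (0 : ℝ) 1,
        η ^ ((1 : ℝ) - 1 / d) + C * (1 - η) ^ 2 - C < 0) ↔
      C > (1 / d) * ((d + 1) / 2) ^ ((d + 1) / d) := by
  have hd0 : 0 < d := by linarith
  set p := 1 / d with hp_def
  have hp : 0 < p := by positivity
  have hp1 : p ≤ 1 := (div_le_one hd0).2 hd
  set v := (C / p) ^ (1 + p)⁻¹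
  have hv : 0 < v := by positivity
  have hCv : C = p * v ^ (1 + p) := by
    rw [rpow_inv_rpow (by positivity) (by positivity), mul_div_cancel₀ _ hp.ne']
  have hstar : (1 / d) * ((d + 1) / 2) ^ ((d + 1) / d) = p * ((1 + p) / (2 * p)) ^ (1 + p) := by
    rw [hp_def]
    congr 2 <;> field_simp
  have hneg : ∀ η ∈ Ioc (0 : ℝ) 1, η ^ (1 - p) + C * (1 - η) ^ 2 - C < 0 ↔
      η ^ (-p) + C * η < 2 * C := fun η hη => by
    rw [rpow_one_sub_add_mul_one_sub_sq_sub_eq hη.1, ← mul_zero η,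
      mul_lt_mul_iff_of_pos_left hη.1, sub_neg]
  rw [exists_congr fun η => and_congr_right (hneg η), gt_iff_lt, hstar, hCv,
    mul_lt_mul_iff_of_pos_left hp, rpow_lt_rpow_iff (by positivity) hv.le (by positivity)]
  exact exists_rpow_neg_add_mul_lt_iff hp hp1 hv
end

section
/- Let d ≥ 2 be an integer, C > C⋆ = (1/d)·((d+1)/2)^{(d+1)/d}, and define Φ(η) = η^{1-1/d} + C·(1-η)^2 for η ∈ [0,1]. Then any global minimizer η_c of Φ on [0,1] satisfies η_c ≥ 2/(d+1). -/
/-!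
Write `α = 1 - 1/d`. At the trial point `η₀ = 2/(d+1)` one has `η₀^α = η₀ · ((d+1)/2)^{1/d}`, and
`C > C⋆` says exactly that `Φ(η₀) < C = Φ(0)`; so a minimizer is not `0`. An interior minimizer
`η` satisfies `α η^{α-1} = 2C(1-η)`, while `Φ(η) ≤ Φ(0)` gives `η^{α-1} ≤ C(2-η)`. Together they
yield `2(1-η) ≤ α(2-η)`, i.e. `η ≥ 2(1-α)/(2-α) = 2/(d+1)`.
-/

open Set

noncomputable section

/-- `Φ(η)` with the exponent `1 - 1/d` generalized to `α`. -/
def dropletEnergy (α C η : ℝ) : ℝ := η ^ α + C * (1 - η) ^ 2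

variable {α C η : ℝ}

theorem dropletEnergy_zero (hα : α ≠ 0) : dropletEnergy α C 0 = C := by
  simp [dropletEnergy, Real.zero_rpow hα]

theorem hasDerivAt_dropletEnergy (hη : 0 < η) :
    HasDerivAt (dropletEnergy α C) (α * η ^ (α - 1) - 2 * C * (1 - η)) η := by
  have hsq : HasDerivAt (fun x : ℝ => C * (1 - x) ^ 2) (-(2 * C * (1 - η))) η := by
    refine ((((hasDerivAt_id' η).const_sub 1).fun_pow 2).const_mul C).congr_deriv ?_
    push_cast
    ring
  exact (Real.hasDerivAt_rpow_const (Or.inl hη.ne')).add hsq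

theorem two_mul_one_sub_le_of_isLocalMin (hα : 0 < α) (hη₀ : 0 < η) (hη₁ : η < 1)
    (hloc : IsLocalMin (dropletEnergy α C) η)
    (hle : dropletEnergy α C η ≤ dropletEnergy α C 0) :
    2 * (1 - α) ≤ (2 - α) * η := by
  set P := η ^ (α - 1)
  have hP : 0 < P := Real.rpow_pos_of_pos hη₀ _
  have hcrit : α * P = 2 * C * (1 - η) := by
    linarith [hloc.hasDerivAt_eq_zero (hasDerivAt_dropletEnergy hη₀)]
  have hC : 0 < C := by
    have : 0 < 2 * C * (1 - η) := hcrit ▸ mul_pos hα hP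
    nlinarith
  have hrpow : η ^ α = P * η := by
    rw [← Real.rpow_add_one hη₀.ne', sub_add_cancel]
  have hPle : P ≤ C * (2 - η) := by
    rw [dropletEnergy_zero hα.ne', dropletEnergy, hrpow] at hle
    nlinarith
  have : 2 * C * (1 - η) ≤ α * (C * (2 - η)) := hcrit ▸ mul_le_mul_of_nonneg_left hPle hα.le
  nlinarith

theorem dropletEnergy_two_div_add_one_lt {d : ℝ} (hd : 0 < d)
    (hC : C > 1 / d * ((d + 1) / 2) ^ ((d + 1) / d)) :
    dropletEnergy (1 - 1 / d) C (2 / (d + 1)) < C := by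
  set T := ((d + 1) / 2) ^ (1 / d)
  have hbase : 0 < (d + 1) / 2 := by positivity
  have hCT : (d + 1) / (2 * d) * T < C := by
    rwa [show (d + 1) / d = 1 + 1 / d by field_simp, Real.rpow_add hbase, Real.rpow_one,
      show 1 / d * ((d + 1) / 2 * T) = (d + 1) / (2 * d) * T by field_simp] at hC
  have hT : T < C * (2 * d / (d + 1)) := calc
    T = (d + 1) / (2 * d) * T * (2 * d / (d + 1)) := by field_simp
    _ < C * (2 * d / (d + 1)) := by gcongr
  have htrial : (2 / (d + 1)) ^ (1 - 1 / d) = 2 / (d + 1) * T := by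
    rw [Real.rpow_sub (by positivity), Real.rpow_one, div_eq_mul_inv _ (_ ^ _),
      ← Real.inv_rpow (by positivity), inv_div]
  have hsq : C * (1 - 2 / (d + 1)) ^ 2 = C - 2 / (d + 1) * (C * (2 * d / (d + 1))) := by
    field_simp; ring
  rw [dropletEnergy, htrial, hsq]
  linarith [mul_lt_mul_of_pos_left hT (by positivity : (0 : ℝ) < 2 / (d + 1))]

end

/-- For `C > C⋆`, any global minimizer of `Φ(η) = η^{1-1/d} + C(1-η)²` over `[0,1]`
satisfies `η_c ≥ 2/(d+1)`. -/
theorem stmt3 (d : ℕ) (hd : 2 ≤ d) (C : ℝ)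
    (hC : C > (1 / (d : ℝ)) * (((d : ℝ) + 1) / 2) ^ (((d : ℝ) + 1) / d))
    (ηc : ℝ) (hηc : ηc ∈ Set.Icc (0 : ℝ) 1)
    (hmin : ∀ η ∈ Set.Icc (0 : ℝ) 1,
      ηc ^ ((1 : ℝ) - 1 / d) + C * (1 - ηc) ^ 2 ≤ η ^ ((1 : ℝ) - 1 / d) + C * (1 - η) ^ 2) :
    ηc ≥ 2 / ((d : ℝ) + 1) := by
  have hd' : (2 : ℝ) ≤ d := by exact_mod_cast hd
  have hα : (0 : ℝ) < 1 - 1 / d := by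
    rw [sub_pos, div_lt_one (by linarith)]; linarith
  have hmin' : IsMinOn (dropletEnergy (1 - 1 / d) C) (Icc 0 1) ηc := hmin
  have htrial : 2 / ((d : ℝ) + 1) ∈ Icc (0 : ℝ) 1 :=
    ⟨by positivity, by rw [div_le_one (by positivity)]; linarith⟩
  rcases hηc.1.eq_or_lt with rfl | hpos
  · have := hmin' htrial
    rw [dropletEnergy_zero hα.ne'] at this
    exact absurd (dropletEnergy_two_div_add_one_lt (by positivity) hC) this.not_gt
  rcases hηc.2.eq_or_lt with rfl | hlt
  · exact htrial.2
  have hloc : IsLocalMin (dropletEnergy (1 - 1 / d) C) ηc :=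
    hmin'.isLocalMin (Icc_mem_nhds hpos hlt)
  have hbound := two_mul_one_sub_le_of_isLocalMin hα hpos hlt hloc (hmin' ⟨le_rfl, zero_le_one⟩)
  rw [ge_iff_le, div_le_iff₀ (by positivity)]
  field_simp at hbound
  linarith
end

section
/- Let β > 1 and let s(m) = −((1−m)/2)·log((1−m)/2) − ((1+m)/2)·log((1+m)/2) for m ∈ (−1,1). Then the equation m = tanh(β m) has exactly three solutions in (−1,1), namely 0, m_β, and −m_β with m_β > 0, and the function m ↦ −s(m)/β − m²/2 on (−1,1) attains its global minimum exactly at m = ±m_β. -/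
/-!
The free energy `F(m) = -s(m)/β - m²/2` has derivative `F'(m) = artanh m / β - m`, so its critical
points are the solutions of `m = tanh (β m)`. Since `artanh` is strictly convex on `[0, 1)` and
vanishes at `0`, the secant slope `artanh m / m` increases strictly on `(0, 1)`, from `1` at `0⁺`
to `+∞` at `1⁻`. Hence it takes the value `β > 1` at exactly one `m_β`, the sign of `F'` on
`(0, 1)` is that of `m - m_β`, and the evenness of `F` handles `(-1, 0]`.
-/

open Real Set Filter Topology

noncomputable def latticeEntropy (m : ℝ) : ℝ :=
  -((1 - m) / 2) * Real.log ((1 - m) / 2) - ((1 + m) / 2) * Real.log ((1 + m) / 2)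

namespace Real

theorem hasDerivAt_artanh {x : ℝ} (hx : x ∈ Ioo (-1) 1) :
    HasDerivAt artanh (1 - x ^ 2)⁻¹ x := by
  have hp : 0 < 1 + x := by linarith [hx.1]
  have hq : 0 < 1 - x := by linarith [hx.2]
  have hlog : HasDerivAt (fun y => (log (1 + y) - log (1 - y)) / 2)
      ((1 / (1 + x) - -1 / (1 - x)) / 2) x :=
    ((((hasDerivAt_id' x).const_add 1).log hp.ne').sub
      (((hasDerivAt_id' x).const_sub 1).log hq.ne')).div_const 2
  have heq : (fun y => (log (1 + y) - log (1 - y)) / 2) =ᶠ[𝓝 x] artanh := by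
    filter_upwards [isOpen_Ioo.mem_nhds hx] with y hy
    rw [artanh_eq_half_log (Ioo_subset_Icc_self hy),
      log_div (by linarith [hy.1]) (by linarith [hy.2])]
    ring
  have hsq : 1 - x ^ 2 ≠ 0 := by nlinarith
  refine (hlog.congr_of_eventuallyEq heq.symm).congr_deriv ?_
  field_simp
  ring

theorem strictConvexOn_artanh : StrictConvexOn ℝ (Ico 0 1) artanh := by
  have hIco : Ico (0 : ℝ) 1 ⊆ Ioo (-1) 1 := fun x hx => ⟨by linarith [hx.1], hx.2⟩
  refine StrictMonoOn.strictConvexOn_of_deriv (convex_Ico 0 1)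
    (fun x hx => (hasDerivAt_artanh (hIco hx)).continuousAt.continuousWithinAt) ?_
  rw [interior_Ico]
  intro x hx y hy hxy
  rw [(hasDerivAt_artanh (hIco (Ioo_subset_Ico_self hx))).deriv,
    (hasDerivAt_artanh (hIco (Ioo_subset_Ico_self hy))).deriv]
  exact inv_strictAnti₀ (by nlinarith [hy.2, hy.1]) (by nlinarith [hx.1])

theorem strictMonoOn_artanh_div : StrictMonoOn (fun x => artanh x / x) (Ioo 0 1) := by
  intro x hx y hy hxy
  simpa [artanh_zero] using strictConvexOn_artanh.secant_strict_mono (left_mem_Ico.2 one_pos)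
    (Ioo_subset_Ico_self hx) (Ioo_subset_Ico_self hy) hx.1.ne' hy.1.ne' hxy

theorem tendsto_artanh_div_nhdsGT_zero : Tendsto (fun x => artanh x / x) (𝓝[>] 0) (𝓝 1) := by
  simpa [artanh_zero, div_eq_inv_mul] using
    (hasDerivAt_artanh (x := 0) (by norm_num)).tendsto_slope_zero_right

end Real

theorem lt_of_hasDerivAt_of_neg_of_pos {f f' : ℝ → ℝ} {a b c x : ℝ}
    (hf : ∀ y ∈ Ico a c, HasDerivAt f (f' y) y) (hb : b ∈ Ioo a c)
    (hneg : ∀ y ∈ Ioo a b, f' y < 0) (hpos : ∀ y ∈ Ioo b c, 0 < f' y)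
    (hx : x ∈ Ico a c) (hxb : x ≠ b) : f b < f x := by
  have hcont : ContinuousOn f (Ico a c) := fun y hy => (hf y hy).continuousAt.continuousWithinAt
  rcases hxb.lt_or_gt with hxb | hbx
  · have hsub : Icc x b ⊆ Ico a c := Icc_subset_Ico hx.1 hb.2
    refine strictAntiOn_of_hasDerivWithinAt_neg (f' := f') (convex_Icc x b) (hcont.mono hsub)
      (fun y hy => ?_) (fun y hy => ?_) ⟨le_rfl, hxb.le⟩ ⟨hxb.le, le_rfl⟩ hxb
    · exact (hf y (hsub (interior_subset hy))).hasDerivWithinAt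
    · rw [interior_Icc] at hy
      exact hneg y ⟨hx.1.trans_lt hy.1, hy.2⟩
  · have hsub : Icc b x ⊆ Ico a c := Icc_subset_Ico hb.1.le hx.2
    refine strictMonoOn_of_hasDerivWithinAt_pos (f' := f') (convex_Icc b x) (hcont.mono hsub)
      (fun y hy => ?_) (fun y hy => ?_) ⟨le_rfl, hbx.le⟩ ⟨hbx.le, le_rfl⟩ hbx
    · exact (hf y (hsub (interior_subset hy))).hasDerivWithinAt
    · rw [interior_Icc] at hy
      exact hpos y ⟨hy.1, hy.2.trans hx.2⟩

theorem latticeEntropy_eq_negMulLog (m : ℝ) :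
    latticeEntropy m = negMulLog ((1 - m) / 2) + negMulLog ((1 + m) / 2) := by
  simp only [latticeEntropy, negMulLog]
  ring

theorem latticeEntropy_neg (m : ℝ) : latticeEntropy (-m) = latticeEntropy m := by
  rw [latticeEntropy_eq_negMulLog, latticeEntropy_eq_negMulLog, sub_neg_eq_add, ← sub_eq_add_neg,
    add_comm]

theorem hasDerivAt_latticeEntropy {m : ℝ} (hm : m ∈ Ioo (-1) 1) :
    HasDerivAt latticeEntropy (-artanh m) m := by
  have hp : 0 < (1 + m) / 2 := by linarith [hm.1]
  have hq : 0 < (1 - m) / 2 := by linarith [hm.2]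
  have h :=
    ((hasDerivAt_negMulLog hq.ne').comp m (((hasDerivAt_id' m).const_sub 1).div_const 2)).add
      ((hasDerivAt_negMulLog hp.ne').comp m (((hasDerivAt_id' m).const_add 1).div_const 2))
  rw [funext latticeEntropy_eq_negMulLog]
  refine HasDerivAt.congr_deriv (f := fun x => negMulLog ((1 - x) / 2) + negMulLog ((1 + x) / 2))
    h ?_
  rw [artanh_eq_half_log (Ioo_subset_Icc_self hm),
    show (1 + m) / (1 - m) = ((1 + m) / 2) / ((1 - m) / 2) by field_simp, log_div hp.ne' hq.ne']
  ring

noncomputable def freeEnergy (β m : ℝ) : ℝ := -latticeEntropy m / β - m ^ 2 / 2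

theorem freeEnergy_neg (β m : ℝ) : freeEnergy β (-m) = freeEnergy β m := by
  simp only [freeEnergy, latticeEntropy_neg, neg_sq]

theorem hasDerivAt_freeEnergy (β : ℝ) {m : ℝ} (hm : m ∈ Ioo (-1) 1) :
    HasDerivAt (freeEnergy β) (artanh m / β - m) m := by
  refine HasDerivAt.congr_deriv (f := fun x => -latticeEntropy x / β - x ^ 2 / 2)
    (((hasDerivAt_latticeEntropy hm).neg.div_const β).sub ((hasDerivAt_pow 2 m).div_const 2)) ?_
  push_cast
  ring

theorem exists_artanh_div_eq {β : ℝ} (hβ : 1 < β) : ∃ m ∈ Ioo 0 1, artanh m / m = β := by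
  obtain ⟨a, ha, ha_lt⟩ : ∃ a ∈ Ioo (0 : ℝ) 1, artanh a / a < β :=
    (Eventually.and (Ioo_mem_nhdsGT one_pos)
      (tendsto_artanh_div_nhdsGT_zero.eventually_lt_const hβ)).exists
  have hb : tanh β ∈ Ioo 0 1 :=
    ⟨by rw [tanh_eq_sinh_div_cosh]; exact div_pos (sinh_pos_iff.2 (by linarith)) (cosh_pos β),
      tanh_lt_one β⟩
  have hb_gt : β < artanh (tanh β) / tanh β := by
    rw [artanh_tanh, lt_div_iff₀ hb.1]
    exact mul_lt_of_lt_one_right (by linarith) hb.2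
  have hab : a ≤ tanh β := (strictMonoOn_artanh_div.lt_iff_lt ha hb).1 (ha_lt.trans hb_gt) |>.le
  have hsub : Icc a (tanh β) ⊆ Ioo 0 1 := Icc_subset_Ioo ha.1 hb.2
  have hcont : ContinuousOn (fun x => artanh x / x) (Icc a (tanh β)) := fun x hx =>
    ((hasDerivAt_artanh (Ioo_subset_Ioo_left (by norm_num) (hsub hx))).continuousAt.div
      continuousAt_id (hsub hx).1.ne').continuousWithinAt
  obtain ⟨m, hm, hmβ⟩ := intermediate_value_Icc hab hcont ⟨ha_lt.le, hb_gt.le⟩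
  exact ⟨m, hsub hm, hmβ⟩

theorem eq_tanh_mul_iff_artanh_eq {β m : ℝ} (hm : m ∈ Ioo (-1) 1) :
    m = tanh (β * m) ↔ artanh m = β * m := by
  constructor
  · intro h
    rw [← artanh_tanh (β * m), ← h]
  · intro h
    rw [← h, tanh_artanh hm]

theorem neg_eq_tanh_mul_neg_iff {β m : ℝ} : -m = tanh (β * -m) ↔ m = tanh (β * m) := by
  rw [mul_neg, tanh_neg, neg_inj]

section FixedPoint

variable {β mβ : ℝ} (hmβ : mβ ∈ Ioo 0 1) (hβ : artanh mβ / mβ = β)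
include hmβ hβ

theorem eq_tanh_mul_iff {x : ℝ} (hx : x ∈ Ioo 0 1) : x = tanh (β * x) ↔ x = mβ := by
  rw [eq_tanh_mul_iff_artanh_eq (Ioo_subset_Ioo_left (by norm_num) hx), ← div_eq_iff hx.1.ne', ← hβ]
  exact strictMonoOn_artanh_div.injOn.eq_iff hx hmβ

theorem artanh_lt_mul_iff {x : ℝ} (hx : x ∈ Ioo 0 1) : artanh x < β * x ↔ x < mβ := by
  rw [← div_lt_iff₀ hx.1, ← hβ]
  exact strictMonoOn_artanh_div.lt_iff_lt hx hmβ

theorem mul_lt_artanh_iff {x : ℝ} (hx : x ∈ Ioo 0 1) : β * x < artanh x ↔ mβ < x := by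
  rw [← lt_div_iff₀ hx.1, ← hβ]
  exact strictMonoOn_artanh_div.lt_iff_lt hmβ hx

theorem setOf_eq_tanh_mul :
    {m ∈ Ioo (-1 : ℝ) 1 | m = tanh (β * m)} = {0, mβ, -mβ} := by
  ext m
  simp only [mem_ofPred_eq, mem_insert_iff, mem_singleton_iff]
  constructor
  · rintro ⟨hm, h⟩
    rcases lt_trichotomy m 0 with hneg | rfl | hpos
    · rw [← neg_eq_tanh_mul_neg_iff, eq_tanh_mul_iff hmβ hβ ⟨neg_pos.2 hneg, by linarith [hm.1]⟩]
        at h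
      exact Or.inr (Or.inr (neg_eq_iff_eq_neg.1 h))
    · exact Or.inl rfl
    · exact Or.inr (Or.inl ((eq_tanh_mul_iff hmβ hβ ⟨hpos, hm.2⟩).1 h))
  · have hfix : mβ = tanh (β * mβ) := (eq_tanh_mul_iff hmβ hβ hmβ).2 rfl
    rintro (rfl | rfl | rfl)
    · simp
    · exact ⟨⟨by linarith [hmβ.1], hmβ.2⟩, hfix⟩
    · exact ⟨⟨by linarith [hmβ.2], by linarith [hmβ.1]⟩, neg_eq_tanh_mul_neg_iff.2 hfix⟩

theorem freeEnergy_lt {m : ℝ} (hm : m ∈ Ioo (-1) 1) (hm₁ : m ≠ mβ) (hm₂ : m ≠ -mβ) :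
    freeEnergy β mβ < freeEnergy β m := by
  have hβ0 : 0 < β := hβ ▸ div_pos (artanh_pos hmβ) hmβ.1
  have habs : freeEnergy β |m| = freeEnergy β m := by
    rcases abs_choice m with h | h <;> rw [h]
    exact freeEnergy_neg β m
  have habs_ne : |m| ≠ mβ := fun h => by
    rcases (abs_eq hmβ.1.le).1 h with h | h
    exacts [hm₁ h, hm₂ h]
  rw [← habs]
  refine lt_of_hasDerivAt_of_neg_of_pos
    (fun y hy => hasDerivAt_freeEnergy β ⟨by linarith [hy.1], hy.2⟩) hmβ (fun y hy => ?_)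
    (fun y hy => ?_) ⟨abs_nonneg m, abs_lt.2 hm⟩ habs_ne
  · rw [sub_neg, div_lt_iff₀ hβ0, mul_comm]
    exact (artanh_lt_mul_iff hmβ hβ ⟨hy.1, hy.2.trans hmβ.2⟩).2 hy.2
  · rw [sub_pos, lt_div_iff₀ hβ0, mul_comm]
    exact (mul_lt_artanh_iff hmβ hβ ⟨hmβ.1.trans hy.1, hy.2⟩).2 hy.1

end FixedPoint

/-- For `β > 1`, `m = tanh(βm)` has exactly three solutions `0, ±m_β` in `(−1,1)`,
and `m ↦ −s(m)/β − m²/2` attains its global minimum on `(−1,1)` exactly at `±m_β`. -/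
theorem stmt5 (β : ℝ) (hβ : 1 < β) :
    ∃ mβ : ℝ, 0 < mβ ∧ mβ < 1 ∧
      {m ∈ Set.Ioo (-1 : ℝ) 1 | m = Real.tanh (β * m)} = {0, mβ, -mβ} ∧
      (∀ m ∈ Set.Ioo (-1 : ℝ) 1,
        -(latticeEntropy mβ) / β - mβ ^ 2 / 2 ≤ -(latticeEntropy m) / β - m ^ 2 / 2) ∧
      (∀ m ∈ Set.Ioo (-1 : ℝ) 1,
        -(latticeEntropy m) / β - m ^ 2 / 2 = -(latticeEntropy mβ) / β - mβ ^ 2 / 2 →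
          m = mβ ∨ m = -mβ) := by
  obtain ⟨mβ, hmβ, hβ'⟩ := exists_artanh_div_eq hβ
  refine ⟨mβ, hmβ.1, hmβ.2, setOf_eq_tanh_mul hmβ hβ', fun m hm => ?_, fun m hm heq => ?_⟩
  · by_cases h : m = mβ ∨ m = -mβ
    · rcases h with rfl | rfl
      exacts [le_rfl, (freeEnergy_neg β mβ).ge]
    · push Not at h
      exact (freeEnergy_lt hmβ hβ' hm h.1 h.2).le
  · by_contra! h
    exact (freeEnergy_lt hmβ hβ' hm h.1 h.2).ne' heq
end

section
/- Let d ≥ 2, and for a Borel set E ⊆ ℝ^d of finite measure define the Fraenkel asymmetry A(E) = inf{|E Δ B(r,x)|/|E| : x ∈ ℝ^d}, where B(r,x) is the ball of radius r centered at x with (σ_d/d)r^d = |E|. Suppose m : ℝ^d → ℝ is measurable, h₋ < h₊, and the superlevel sets E_h = {x : m(x) ≥ h} satisfy: (i) E_k ⊆ E_h for k > h, and (ii) the volume of E_{h₊} outside every ball of radius ρ is at least η|E_{h₊}|, for some ρ, η > 0. If additionally for each h ∈ [h₋, h₊] the radius r_h of the ball of the same volume as E_h satisfies r_h ≤ ρ,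 then A(E_h) ≥ η·|E_{h₊}|/|E_h| for all h ∈ [h₋, h₊]. -/
/-! For every centre `x`, the part of the core `E_{h₊}` lying outside `B(x, ρ)` is contained in
`E_h \ B(x, r_h)`, because `E_{h₊} ⊆ E_h` and `r_h ≤ ρ`; so each symmetric difference
`E_h Δ B(x, r_h)` has measure at least `η |E_{h₊}|`, and dividing by `|E_h|` bounds the
infimum defining `A(E_h)`. -/

open MeasureTheory Metric

/-- The radius of the ball with the same volume as `E`. -/
noncomputable def equivRadius (d : ℕ) (E : Set (EuclideanSpace ℝ (Fin d))) : ℝ :=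
  ((volume E).toReal / (volume (ball (0 : EuclideanSpace ℝ (Fin d)) 1)).toReal) ^ (1 / (d : ℝ))

/-- Fraenkel asymmetry of a set `E`. -/
noncomputable def fraenkel (d : ℕ) (E : Set (EuclideanSpace ℝ (Fin d))) : ℝ :=
  sInf {v : ℝ | ∃ x : EuclideanSpace ℝ (Fin d),
    v = (volume (symmDiff E (ball x (equivRadius d E)))).toReal / (volume E).toReal}

theorem le_fraenkel_of_forall_le {d : ℕ} {E : Set (EuclideanSpace ℝ (Fin d))} {c : ℝ}
    (hc : ∀ x, c ≤ (volume (symmDiff E (ball x (equivRadius d E)))).toReal) :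
    c / (volume E).toReal ≤ fraenkel d E :=
  le_csInf ⟨_, 0, rfl⟩ fun _ ⟨x, hv⟩ =>
    hv ▸ div_le_div_of_nonneg_right (hc x) ENNReal.toReal_nonneg

section Ball

variable {α : Type*} [PseudoMetricSpace α] {E F : Set α} {x : α} {r ρ : ℝ}

theorem diff_ball_subset_symmDiff_ball (hFE : F ⊆ E) (hr : r ≤ ρ) :
    F \ ball x ρ ⊆ symmDiff E (ball x r) :=
  fun _ hy => Or.inl ⟨hFE hy.1, fun hb => hy.2 (ball_subset_ball hr hb)⟩

theorem mul_toReal_le_measure_symmDiff_ball [ProperSpace α] [MeasurableSpace α] {μ : Measure α}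
    [IsFiniteMeasureOnCompacts μ] {c : ℝ} (hFE : F ⊆ E) (hE : μ E ≠ ⊤) (hr : r ≤ ρ)
    (hc : 0 ≤ c) (hout : ENNReal.ofReal c * μ F ≤ μ (F \ ball x ρ)) :
    c * (μ F).toReal ≤ (μ (symmDiff E (ball x r))).toReal := by
  rw [← ENNReal.toReal_ofReal hc, ← ENNReal.toReal_mul]
  exact ENNReal.toReal_mono (measure_symmDiff_ne_top hE measure_ball_lt_top.ne)
    (hout.trans (measure_mono (diff_ball_subset_symmDiff_ball hFE hr)))

end Ball

theorem stmt18_general (d : ℕ)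
    (m : EuclideanSpace ℝ (Fin d) → ℝ)
    (hminus hplus ρ η : ℝ) (hη : 0 < η)
    (hfin : ∀ h ∈ Set.Icc hminus hplus,
      volume {x | h ≤ m x} < ⊤)
    (hout : ∀ x : EuclideanSpace ℝ (Fin d),
      ENNReal.ofReal η * volume {y | hplus ≤ m y} ≤
        volume ({y | hplus ≤ m y} \ ball x ρ))
    (hrad : ∀ h ∈ Set.Icc hminus hplus, equivRadius d {x | h ≤ m x} ≤ ρ) :
    ∀ h ∈ Set.Icc hminus hplus,
      η * (volume {x | hplus ≤ m x}).toReal / (volume {x | h ≤ m x}).toReal ≤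
        fraenkel d {x | h ≤ m x} := by
  intro h hIcc
  have hsub : {x | hplus ≤ m x} ⊆ {x | h ≤ m x} := fun _ hx => hIcc.2.trans hx
  exact le_fraenkel_of_forall_le fun x =>
    mul_toReal_le_measure_symmDiff_ball hsub (hfin h hIcc).ne (hrad h hIcc) hη.le (hout x)

/-- Nestedness of superlevel sets transfers an asymmetry lower bound on the droplet core
`E_{h₊}` to all intermediate level sets. -/
theorem stmt18 (d : ℕ) (hd : 2 ≤ d)
    (m : EuclideanSpace ℝ (Fin d) → ℝ) (hm : Measurable m)
    (hminus hplus ρ η : ℝ) (hh : hminus < hplus) (hρ : 0 < ρ) (hη : 0 < η)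
    (hfin : ∀ h ∈ Set.Icc hminus hplus,
      volume {x | h ≤ m x} < ⊤)
    (hpos : 0 < volume {x | hplus ≤ m x})
    (hout : ∀ x : EuclideanSpace ℝ (Fin d),
      ENNReal.ofReal η * volume {y | hplus ≤ m y} ≤
        volume ({y | hplus ≤ m y} \ ball x ρ))
    (hrad : ∀ h ∈ Set.Icc hminus hplus, equivRadius d {x | h ≤ m x} ≤ ρ) :
    ∀ h ∈ Set.Icc hminus hplus,
      η * (volume {x | hplus ≤ m x}).toReal / (volume {x | h ≤ m x}).toReal ≤
        fraenkel d {x | h ≤ m x} :=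
  stmt18_general d m hminus hplus ρ η hη hfin hout hrad
end

section
/- Let C > 0, d ≥ 2 an integer, and let Φ(η) = η^{1−1/d} + C(1−η)² for η ∈ [0,1], with global minimum value attained at η_c ∈ [0,1]. Then there exists φ₀ > 0 (depending on C and d) such that Φ(η) − Φ(η_c) ≥ φ₀ (η − η_c)² for all η ∈ [0,1], provided Φ has a unique global minimizer, i.e., C ≠ C⋆ = (1/d)((d+1)/2)^{(d+1)/d}. -/
/-!
Write `p = 1 - 1/d ∈ (0, 1)`. The second derivative `Φ'' = p (p - 1) η ^ (p - 2) + 2C` is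
strictly increasing on `(0, ∞)`, so by Rolle `Φ` cannot have two interior critical points with
the same value, and a minimizer is never `1` because `Φ'(1) = p > 0`. Hence two distinct
minimizers would be `0` and a critical point `B ∈ (0, 1)` with `Φ(B) = Φ(0)`, and solving these
two equations gives `B = 2 / (d + 1)` and `C = C⋆`. Near the unique minimizer `Φ` grows
quadratically: at `0` because `η ^ p` has infinite slope there, at an interior minimizer because
`Φ''` is positive there (were it `≤ 0`, monotonicity of `Φ''` would make `Φ` increase just to the
left). Compactness of `[0, 1]` turns local quadratic growth plus uniqueness into global
quadratic growth.
-/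

open Set Filter Topology

theorem exists_forall_mul_dist_sq_le_of_isCompact {X : Type*} [MetricSpace X] {K : Set X}
    (hK : IsCompact K) {g : X → ℝ} (hg : ContinuousOn g K) {x₀ : X}
    (hstrict : ∀ x ∈ K, x ≠ x₀ → g x₀ < g x) {c : ℝ} (hc : 0 < c)
    (hloc : ∀ᶠ x in 𝓝[K \ {x₀}] x₀, c * dist x x₀ ^ 2 ≤ g x - g x₀) :
    ∃ φ > 0, ∀ x ∈ K, φ * dist x x₀ ^ 2 ≤ g x - g x₀ := by
  obtain ⟨ε, hε, hnear⟩ := Metric.mem_nhdsWithin_iff.1 hloc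
  set F := K ∩ {x | ε ≤ dist x x₀}
  have hdist : ∀ x ∈ F, 0 < dist x x₀ := fun x hx => hε.trans_le hx.2
  obtain ⟨m, hm, hfar⟩ := IsCompact.exists_forall_le' (a := 0)
    (f := fun x => (g x - g x₀) / dist x x₀ ^ 2)
    (hK.inter_right (isClosed_le continuous_const (continuous_id.dist continuous_const)))
    (((hg.mono inter_subset_left).sub continuousOn_const).div (by fun_prop)
      fun x hx => (pow_pos (hdist x hx) 2).ne')
    fun x hx => div_pos (sub_pos.2 (hstrict x hx.1 (dist_pos.1 (hdist x hx))))
      (pow_pos (hdist x hx) 2)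
  refine ⟨min c m, lt_min hc hm, fun x hx => ?_⟩
  rcases eq_or_ne x x₀ with rfl | hne
  · simp
  rcases lt_or_ge (dist x x₀) ε with hlt | hge
  · exact (mul_le_mul_of_nonneg_right (min_le_left c m) (sq_nonneg _)).trans
      (hnear ⟨Metric.mem_ball.2 hlt, hx, hne⟩)
  · have := hfar x ⟨hx, hge⟩
    rw [le_div_iff₀ (pow_pos (hdist x ⟨hx, hge⟩) 2)] at this
    exact (mul_le_mul_of_nonneg_right (min_le_right c m) (sq_nonneg _)).trans this

theorem eventually_mul_sq_le_sub_of_hasDerivAt {f f' : ℝ → ℝ} {f'' x₀ : ℝ}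
    (hf : ∀ᶠ x in 𝓝 x₀, HasDerivAt f (f' x) x) (hf' : HasDerivAt f' f'' x₀)
    (hcrit : f' x₀ = 0) (hpos : 0 < f'') :
    ∀ᶠ x in 𝓝 x₀, f'' / 4 * (x - x₀) ^ 2 ≤ f x - f x₀ := by
  set g : ℝ → ℝ := fun x => f x - f'' / 4 * (x - x₀) ^ 2
  have hg : ∀ᶠ x in 𝓝 x₀, HasDerivAt g (f' x - f'' / 2 * (x - x₀)) x :=
    hf.mono fun x hx => (hx.sub (((hasDerivAt_id' x).sub_const x₀).pow 2 |>.const_mul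
      (f'' / 4))).congr_deriv (by ring)
  have hg' : HasDerivAt (fun x => f' x - f'' / 2 * (x - x₀)) (f'' / 2) x₀ :=
    (hf'.sub (((hasDerivAt_id' x₀).sub_const x₀).const_mul (f'' / 2))).congr_deriv (by ring)
  have hderiv : deriv g =ᶠ[𝓝 x₀] fun x => f' x - f'' / 2 * (x - x₀) :=
    hg.mono fun x hx => hx.deriv
  have hmin : IsLocalMin g x₀ :=
    isLocalMin_of_deriv_deriv_pos (by rw [hderiv.deriv_eq, hg'.deriv]; linarith)
      (by rw [hderiv.eq_of_nhds]; simp [hcrit]) hg.self_of_nhds.continuousAt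
  filter_upwards [hmin] with x hx
  simp only [g, sub_self, pow_two, mul_zero, sub_zero] at hx
  linarith

theorem IsMinOn.nonpos_of_hasDerivAt_right_endpoint {f : ℝ → ℝ} {a b f' : ℝ} (hab : a < b)
    (hmin : IsMinOn f (Icc a b) b) (hf : HasDerivAt f f' b) : f' ≤ 0 := by
  have hcone : a - b ∈ posTangentConeAt (Icc a b) b :=
    sub_mem_posTangentConeAt_of_segment_subset (by rw [segment_symm, segment_eq_Icc hab.le])
  have := (hmin.localize.on_subset subset_rfl).hasFDerivWithinAt_nonneg
    hf.hasDerivWithinAt.hasFDerivWithinAt hcone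
  simp only [ContinuousLinearMap.toSpanSingleton_apply, smul_eq_mul] at this
  nlinarith

theorem second_deriv_pos_of_le_of_strictMonoOn {f f' f'' : ℝ → ℝ} {a b : ℝ} (hab : a < b)
    (hf : ∀ x ∈ Icc a b, HasDerivAt f (f' x) x) (hf' : ∀ x ∈ Icc a b, HasDerivAt f' (f'' x) x)
    (hmono : StrictMonoOn f'' (Icc a b)) (hle : f b ≤ f a) (hcrit : f' b = 0) : 0 < f'' b := by
  obtain ⟨ξ, hξ, hξslope⟩ := exists_hasDerivAt_eq_slope f f' hab
    (fun x hx => (hf x hx).continuousAt.continuousWithinAt)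
    fun x hx => hf x (Ioo_subset_Icc_self hx)
  have hξb : Icc ξ b ⊆ Icc a b := Icc_subset_Icc hξ.1.le le_rfl
  obtain ⟨ζ, hζ, hζslope⟩ := exists_hasDerivAt_eq_slope f' f'' hξ.2
    (fun x hx => (hf' x (hξb hx)).continuousAt.continuousWithinAt)
    fun x hx => hf' x (hξb (Ioo_subset_Icc_self hx))
  have hf'ξ : f' ξ ≤ 0 := by
    rw [hξslope]; exact div_nonpos_of_nonpos_of_nonneg (by linarith) (by linarith)
  have hf''ζ : 0 ≤ f'' ζ := by
    rw [hζslope, hcrit]; exact div_nonneg (by linarith) (sub_pos.2 (hζ.1.trans hζ.2)).le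
  exact hf''ζ.trans_lt (hmono (hξb (Ioo_subset_Icc_self hζ)) ⟨hab.le, le_rfl⟩ hζ.2)

theorem ne_of_critical_of_strictMonoOn_second_deriv {f f' f'' : ℝ → ℝ} {a b : ℝ} (hab : a < b)
    (hf : ∀ x ∈ Icc a b, HasDerivAt f (f' x) x) (hf' : ∀ x ∈ Icc a b, HasDerivAt f' (f'' x) x)
    (hmono : StrictMonoOn f'' (Icc a b)) (ha : f' a = 0) (hb : f' b = 0) : f a ≠ f b := by
  intro hfab
  have hfc : ContinuousOn f (Icc a b) := fun x hx => (hf x hx).continuousAt.continuousWithinAt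
  have hf'c : ContinuousOn f' (Icc a b) := fun x hx => (hf' x hx).continuousAt.continuousWithinAt
  obtain ⟨c, hc, hf'c0⟩ := exists_hasDerivAt_eq_zero hab hfc hfab
    fun x hx => hf x (Ioo_subset_Icc_self hx)
  obtain ⟨u, hu, hu0⟩ := exists_hasDerivAt_eq_zero hc.1
    (hf'c.mono (Icc_subset_Icc le_rfl hc.2.le)) (ha.trans hf'c0.symm)
    fun x hx => hf' x ⟨hx.1.le, hx.2.le.trans hc.2.le⟩
  obtain ⟨v, hv, hv0⟩ := exists_hasDerivAt_eq_zero hc.2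
    (hf'c.mono (Icc_subset_Icc hc.1.le le_rfl)) (hf'c0.trans hb.symm)
    fun x hx => hf' x ⟨hc.1.le.trans hx.1.le, hx.2.le⟩
  have := hmono ⟨hu.1.le, hu.2.le.trans hc.2.le⟩ ⟨hc.1.le.trans hv.1.le, hv.2.le⟩
    (hu.2.trans hv.1)
  rw [hu0, hv0] at this
  exact lt_irrefl 0 this

noncomputable def reducedEnergy (p C η : ℝ) : ℝ := η ^ p + C * (1 - η) ^ 2

noncomputable def reducedEnergy' (p C η : ℝ) : ℝ := p * η ^ (p - 1) - 2 * C * (1 - η)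

noncomputable def reducedEnergy'' (p C η : ℝ) : ℝ := p * (p - 1) * η ^ (p - 2) + 2 * C

section ReducedEnergy

variable {p C : ℝ}

theorem hasDerivAt_reducedEnergy {η : ℝ} (hη : η ≠ 0) :
    HasDerivAt (reducedEnergy p C) (reducedEnergy' p C η) η :=
  ((Real.hasDerivAt_rpow_const (Or.inl hη)).add
    ((((hasDerivAt_id' η).const_sub 1).pow 2).const_mul C)).congr_deriv
    (by simp only [reducedEnergy']; ring)

theorem hasDerivAt_reducedEnergy' {η : ℝ} (hη : η ≠ 0) :
    HasDerivAt (reducedEnergy' p C) (reducedEnergy'' p C η) η :=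
  (((Real.hasDerivAt_rpow_const (Or.inl hη)).const_mul p).sub
    (((hasDerivAt_id' η).const_sub 1).const_mul (2 * C))).congr_deriv
    (by simp only [reducedEnergy'', sub_sub, one_add_one_eq_two]; ring)

theorem continuous_reducedEnergy (hp : 0 ≤ p) : Continuous (reducedEnergy p C) :=
  (Real.continuous_rpow_const hp).add (by fun_prop)

theorem reducedEnergy_zero (hp : 0 < p) : reducedEnergy p C 0 = C := by
  simp [reducedEnergy, Real.zero_rpow hp.ne']

theorem strictMonoOn_reducedEnergy'' (hp0 : 0 < p) (hp1 : p < 1) :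
    StrictMonoOn (reducedEnergy'' p C) (Ioi 0) := fun x hx y _ hxy => by
  have : y ^ (p - 2) < x ^ (p - 2) := Real.rpow_lt_rpow_of_neg hx hxy (by linarith)
  have : p * (p - 1) < 0 := mul_neg_of_pos_of_neg hp0 (by linarith)
  simp only [reducedEnergy'']
  nlinarith

theorem not_isMinOn_reducedEnergy_one (hp : 0 < p) :
    ¬ IsMinOn (reducedEnergy p C) (Icc 0 1) 1 := fun hmin => by
  have := hmin.nonpos_of_hasDerivAt_right_endpoint one_pos (hasDerivAt_reducedEnergy one_ne_zero)
  simp only [reducedEnergy', Real.one_rpow, mul_one, sub_self, mul_zero, sub_zero] at this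
  linarith

theorem reducedEnergy'_eq_zero_of_isMinOn {η : ℝ} (hmin : IsMinOn (reducedEnergy p C) (Icc 0 1) η)
    (hη : η ∈ Ioo 0 1) : reducedEnergy' p C η = 0 :=
  (hmin.isLocalMin (Icc_mem_nhds hη.1 hη.2)).hasDerivAt_eq_zero (hasDerivAt_reducedEnergy hη.1.ne')

theorem reducedEnergy''_pos_of_isMinOn (hp0 : 0 < p) (hp1 : p < 1) {η : ℝ}
    (hmin : IsMinOn (reducedEnergy p C) (Icc 0 1) η) (hη : η ∈ Ioo 0 1) :
    0 < reducedEnergy'' p C η := by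
  have hpos : Icc (η / 2) η ⊆ Ioi 0 := fun x hx => (half_pos hη.1).trans_le hx.1
  exact second_deriv_pos_of_le_of_strictMonoOn (half_lt_self hη.1)
    (fun x hx => hasDerivAt_reducedEnergy (hpos hx).ne')
    (fun x hx => hasDerivAt_reducedEnergy' (hpos hx).ne')
    ((strictMonoOn_reducedEnergy'' hp0 hp1).mono hpos)
    (hmin ⟨(half_pos hη.1).le, (half_le_self hη.1.le).trans hη.2.le⟩)
    (reducedEnergy'_eq_zero_of_isMinOn hmin hη)

theorem reducedEnergy_tie (hp : 0 < p) {B : ℝ} (hB : 0 < B) (hcrit : reducedEnergy' p C B = 0)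
    (heq : reducedEnergy p C B = reducedEnergy p C 0) :
    (2 - p) * B = 2 * (1 - p) ∧ C * (2 - B) = B ^ (p - 1) := by
  have hX : 0 < B ^ (p - 1) := Real.rpow_pos_of_pos hB _
  have hBp : B ^ p = B ^ (p - 1) * B := by rw [Real.rpow_sub_one hB.ne']; field_simp
  rw [reducedEnergy_zero hp, reducedEnergy, hBp] at heq
  have hCX : C * (2 - B) = B ^ (p - 1) :=
    mul_right_cancel₀ hB.ne' (by linarith)
  have hC : C ≠ 0 := by rintro rfl; rw [zero_mul] at hCX; linarith
  refine ⟨mul_left_cancel₀ hC ?_, hCX⟩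
  simp only [reducedEnergy', ← hCX] at hcrit
  linarith

theorem eq_of_isMinOn_reducedEnergy (hp0 : 0 < p) (hp1 : p < 1)
    (htie : ∀ B ∈ Ioo (0 : ℝ) 1, reducedEnergy' p C B = 0 →
      reducedEnergy p C B ≠ reducedEnergy p C 0)
    {a b : ℝ} (ha : a ∈ Icc (0 : ℝ) 1) (hb : b ∈ Icc (0 : ℝ) 1)
    (hmina : IsMinOn (reducedEnergy p C) (Icc 0 1) a)
    (hminb : IsMinOn (reducedEnergy p C) (Icc 0 1) b) : a = b := by
  by_contra hne
  wlog hab : a < b generalizing a b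
  · exact this hb ha hminb hmina (Ne.symm hne) ((Ne.symm hne).lt_of_le (not_lt.1 hab))
  have hb1 : b < 1 :=
    hb.2.lt_of_ne (by rintro rfl; exact not_isMinOn_reducedEnergy_one hp0 hminb)
  have hcritb := reducedEnergy'_eq_zero_of_isMinOn hminb ⟨ha.1.trans_lt hab, hb1⟩
  have hfab : reducedEnergy p C a = reducedEnergy p C b := le_antisymm (hmina hb) (hminb ha)
  rcases ha.1.eq_or_lt with rfl | ha0
  · exact htie b ⟨hab, hb1⟩ hcritb hfab.symm
  have hpos : Icc a b ⊆ Ioi 0 := fun x hx => ha0.trans_le hx.1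
  exact ne_of_critical_of_strictMonoOn_second_deriv hab
    (fun x hx => hasDerivAt_reducedEnergy (hpos hx).ne')
    (fun x hx => hasDerivAt_reducedEnergy' (hpos hx).ne')
    ((strictMonoOn_reducedEnergy'' hp0 hp1).mono hpos)
    (reducedEnergy'_eq_zero_of_isMinOn hmina ⟨ha0, hab.trans hb1⟩) hcritb hfab

theorem eventually_quadratic_growth_reducedEnergy (hp0 : 0 < p) (hp1 : p < 1) (hC : 0 ≤ C)
    {ηc : ℝ} (hηc : ηc ∈ Icc (0 : ℝ) 1) (hmin : IsMinOn (reducedEnergy p C) (Icc 0 1) ηc) :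
    ∃ c > 0, ∀ᶠ η in 𝓝[Icc 0 1 \ {ηc}] ηc,
      c * (η - ηc) ^ 2 ≤ reducedEnergy p C η - reducedEnergy p C ηc := by
  rcases hηc.1.eq_or_lt with rfl | h0
  · have hsub : Icc (0 : ℝ) 1 \ {0} ⊆ Ioi 0 := fun x hx => lt_of_le_of_ne hx.1.1 (Ne.symm hx.2)
    have hlarge : ∀ᶠ η in 𝓝[>] 0, 2 * C + 1 ≤ η ^ (p - 1) :=
      (tendsto_rpow_neg_nhdsGT_zero (by linarith)).eventually_ge_atTop _
    refine ⟨1, one_pos, ?_⟩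
    filter_upwards [nhdsWithin_mono _ hsub hlarge, self_mem_nhdsWithin] with η hη hηI
    have hη0 : 0 < η := hsub hηI
    have hηp : η ^ p = η ^ (p - 1) * η := by rw [Real.rpow_sub_one hη0.ne']; field_simp
    rw [reducedEnergy_zero hp0, reducedEnergy, hηp]
    nlinarith [mul_le_mul_of_nonneg_right hη hη0.le, mul_nonneg hC (sq_nonneg η),
      mul_nonneg hη0.le (sub_nonneg.2 hηI.1.2)]
  · have hηc1 : ηc < 1 :=
      hηc.2.lt_of_ne (by rintro rfl; exact not_isMinOn_reducedEnergy_one hp0 hmin)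
    have hpos := reducedEnergy''_pos_of_isMinOn hp0 hp1 hmin ⟨h0, hηc1⟩
    exact ⟨_, by positivity, nhdsWithin_le_nhds <| eventually_mul_sq_le_sub_of_hasDerivAt
      ((lt_mem_nhds h0).mono fun x hx => hasDerivAt_reducedEnergy hx.ne')
      (hasDerivAt_reducedEnergy' h0.ne') (reducedEnergy'_eq_zero_of_isMinOn hmin ⟨h0, hηc1⟩)
      hpos⟩

theorem exists_quadratic_growth_reducedEnergy (hp0 : 0 < p) (hp1 : p < 1) (hC : 0 ≤ C)
    (htie : ∀ B ∈ Ioo (0 : ℝ) 1, reducedEnergy' p C B = 0 →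
      reducedEnergy p C B ≠ reducedEnergy p C 0)
    {ηc : ℝ} (hηc : ηc ∈ Icc (0 : ℝ) 1) (hmin : IsMinOn (reducedEnergy p C) (Icc 0 1) ηc) :
    ∃ φ > 0, ∀ η ∈ Icc (0 : ℝ) 1,
      φ * (η - ηc) ^ 2 ≤ reducedEnergy p C η - reducedEnergy p C ηc := by
  obtain ⟨c, hc, hloc⟩ := eventually_quadratic_growth_reducedEnergy hp0 hp1 hC hηc hmin
  have hstrict : ∀ η ∈ Icc (0 : ℝ) 1, η ≠ ηc → reducedEnergy p C ηc < reducedEnergy p C η :=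
    fun η hη hne => (hmin hη).lt_of_ne fun heq => hne <|
      eq_of_isMinOn_reducedEnergy hp0 hp1 htie hη hηc (fun y hy => heq ▸ hmin hy) hmin
  simpa only [Real.dist_eq, sq_abs] using
    exists_forall_mul_dist_sq_le_of_isCompact isCompact_Icc
      (continuous_reducedEnergy hp0.le).continuousOn hstrict hc
      (by simpa only [Real.dist_eq, sq_abs] using hloc)

end ReducedEnergy

theorem critical_constant_eq {d : ℕ} (hd : 0 < d) {B C : ℝ}
    (hB : (2 - (1 - 1 / (d : ℝ))) * B = 2 * (1 - (1 - 1 / (d : ℝ))))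
    (hC : C * (2 - B) = B ^ ((1 - 1 / (d : ℝ)) - 1)) :
    C = (1 / (d : ℝ)) * (((d : ℝ) + 1) / 2) ^ (((d : ℝ) + 1) / d) := by
  have hd0 : (0 : ℝ) < d := by exact_mod_cast hd
  have hBd : B = ((d + 1) / 2 : ℝ)⁻¹ := by field_simp at hB ⊢; linarith
  rw [sub_sub_cancel_left, hBd, Real.rpow_neg (by positivity), Real.inv_rpow (by positivity),
    inv_inv] at hC
  rw [show ((d : ℝ) + 1) / d = 1 / d + 1 by field_simp; ring, Real.rpow_add (by positivity),
    Real.rpow_one, ← hC]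
  field_simp
  ring

/-- Quadratic stability of the reduced free energy `Φ(η) = η^{1−1/d} + C(1−η)²` around its
global minimizer on `[0,1]`, provided `C ≠ C⋆` (so the minimizer is unique). -/
theorem stmt19 (d : ℕ) (hd : 2 ≤ d) (C : ℝ) (hC : 0 < C)
    (hCne : C ≠ (1 / (d : ℝ)) * (((d : ℝ) + 1) / 2) ^ (((d : ℝ) + 1) / d))
    (ηc : ℝ) (hηc : ηc ∈ Set.Icc (0 : ℝ) 1)
    (hmin : ∀ η ∈ Set.Icc (0 : ℝ) 1,
      ηc ^ ((1 : ℝ) - 1 / d) + C * (1 - ηc) ^ 2 ≤ η ^ ((1 : ℝ) - 1 / d) + C * (1 - η) ^ 2) :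
    ∃ φ₀ > 0, ∀ η ∈ Set.Icc (0 : ℝ) 1,
      (η ^ ((1 : ℝ) - 1 / d) + C * (1 - η) ^ 2) -
          (ηc ^ ((1 : ℝ) - 1 / d) + C * (1 - ηc) ^ 2) ≥ φ₀ * (η - ηc) ^ 2 := by
  have hd' : (2 : ℝ) ≤ d := by exact_mod_cast hd
  have hd_inv : 1 / (d : ℝ) ≤ 1 / 2 := one_div_le_one_div_of_le two_pos hd'
  have hp0 : 0 < 1 - 1 / (d : ℝ) := by linarith
  have hp1 : 1 - 1 / (d : ℝ) < 1 := sub_lt_self _ (by positivity)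
  have htie : ∀ B ∈ Ioo (0 : ℝ) 1, reducedEnergy' (1 - 1 / d) C B = 0 →
      reducedEnergy (1 - 1 / d) C B ≠ reducedEnergy (1 - 1 / d) C 0 := fun B hB hcrit heq =>
    hCne ((reducedEnergy_tie hp0 hB.1 hcrit heq).elim (critical_constant_eq (by omega)))
  exact exists_quadratic_growth_reducedEnergy hp0 hp1 hC.le htie hηc (isMinOn_iff.2 hmin)
end
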